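/- Let d ∈ ℕ, let Q ⊆ (Fin d → ℝ) be a nonempty, convex, bounded set, let S be a nonempty finite type, and for each j ∈ S let h_j : (Fin d → ℝ) → ℝ be an affine function. Define F(x) = min_{j ∈ S} h_j(x). Then for every p ∈ Q, the infimum of ∑ i, w i * F (x i) over all m ∈ ℕ, weights w : Fin m → ℝ with w i ≥ 0 and ∑ i, w i = 1, and points x : Fin m → (Fin d → ℝ) with x i ∈ Q for all i and ∑ i, w i • x i = p, is equal to the infimum of ∑ j, W j * h_j (q j) over all weights W : S → ℝ with W j ≥ 0 and ∑ j, W j = 1 and points q : S → (Fin d → ℝ) with q j ∈ Q for all j and ∑ j, W j • q j = p. -/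

import Mathlib

/-!
Group the points of a finite decomposition of `p` according to a facet `j` at which the minimum
`F = min_j h_j` is attained. On each group `F` coincides with the affine `h_j`, so replacing the
group by its barycentre (a point of `Q` by convexity) leaves the weighted objective unchanged:
every value of the first problem is a value of the second. Conversely `F ≤ h_j`, so every
facet-indexed decomposition is a finite decomposition with no larger `F`-objective. Two sets of
values related in this way have the same infimum.
-/

open Finset

theorem AffineMap.sum_smul_apply_of_sum_smul_eq {k V₁ V₂ ι : Type*} [Ring k] [AddCommGroup V₁]
    [Module k V₁] [AddCommGroup V₂] [Module k V₂] (f : V₁ →ᵃ[k] V₂) {t : Finset ι} {w : ι → k}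
    {x : ι → V₁} {q : V₁} (hq : (∑ i ∈ t, w i) • q = ∑ i ∈ t, w i • x i) :
    (∑ i ∈ t, w i) • f q = ∑ i ∈ t, w i • f (x i) := by
  rw [f.decomp]
  simp only [Pi.add_apply, smul_add, sum_add_distrib, ← sum_smul]
  rw [← map_smul, hq, map_sum]
  simp only [map_smul]

section

variable {𝕜 E S : Type*} [Field 𝕜] [LinearOrder 𝕜] [IsStrictOrderedRing 𝕜] [AddCommGroup E]
  [Module 𝕜 E]

theorem Convex.exists_mem_sum_smul_eq {ι : Type*} {s : Set E} (hs : Convex 𝕜 s)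
    (hne : s.Nonempty) {t : Finset ι} {w : ι → 𝕜} {x : ι → E} (hw : ∀ i ∈ t, 0 ≤ w i)
    (hx : ∀ i ∈ t, x i ∈ s) : ∃ q ∈ s, (∑ i ∈ t, w i) • q = ∑ i ∈ t, w i • x i := by
  rcases (sum_nonneg hw).eq_or_lt with hzero | hpos
  · obtain ⟨q, hq⟩ := hne
    refine ⟨q, hq, ?_⟩
    rw [← hzero, zero_smul, eq_comm]
    exact sum_eq_zero fun i hi => by
      rw [(sum_eq_zero_iff_of_nonneg hw).1 hzero.symm i hi, zero_smul]
  · exact ⟨t.centerMass w x, hs.centerMass_mem hw hpos hx, smul_inv_smul₀ hpos.ne' _⟩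

def decompositionValues (Q : Set E) (p : E) (g : E → 𝕜) : Set 𝕜 :=
  {t | ∃ (m : ℕ) (w : Fin m → 𝕜) (x : Fin m → E),
    (∀ i, 0 ≤ w i) ∧ (∑ i, w i = 1) ∧ (∀ i, x i ∈ Q) ∧ (∑ i, w i • x i = p) ∧
    t = ∑ i, w i * g (x i)}

def facetDecompositionValues [Fintype S] (Q : Set E) (p : E) (h : S → E → 𝕜) : Set 𝕜 :=
  {t | ∃ (W : S → 𝕜) (q : S → E),
    (∀ j, 0 ≤ W j) ∧ (∑ j, W j = 1) ∧ (∀ j, q j ∈ Q) ∧ (∑ j, W j • q j = p) ∧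
    t = ∑ j, W j * h j (q j)}

theorem decompositionValues_inf'_subset_facetDecompositionValues [Fintype S] [Nonempty S]
    {Q : Set E} (hQ : Convex 𝕜 Q) (hQne : Q.Nonempty) (f : S → E →ᵃ[𝕜] 𝕜) (p : E) :
    decompositionValues Q p (fun y => univ.inf' univ_nonempty fun j => f j y) ⊆
      facetDecompositionValues Q p fun j => f j := by
  classical
  rintro t ⟨m, w, x, hw, hw1, hxQ, hxp, rfl⟩
  choose c _ hc using fun i => exists_mem_eq_inf' univ_nonempty fun j => f j (x i)
  choose q hqQ hq using fun j =>
    hQ.exists_mem_sum_smul_eq hQne (t := {i | c i = j}) (fun i _ => hw i) (fun i _ => hxQ i)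
  refine ⟨fun j => ∑ i with c i = j, w i, q, fun j => sum_nonneg fun i _ => hw i, ?_, hqQ,
    ?_, ?_⟩
  · exact (sum_fiberwise _ _ _).trans hw1
  · simp only [hq]
    exact (sum_fiberwise _ _ _).trans hxp
  · calc ∑ i, w i * univ.inf' univ_nonempty (fun j => f j (x i))
        = ∑ j, ∑ i with c i = j, w i * f j (x i) := by
          simp only [hc, ← sum_fiberwise univ c fun i => w i * f (c i) (x i)]
          refine sum_congr rfl fun j _ => sum_congr rfl fun i hi => ?_
          rw [(mem_filter.1 hi).2]
      _ = ∑ j, (∑ i with c i = j, w i) * f j (q j) :=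
          sum_congr rfl fun j _ => ((f j).sum_smul_apply_of_sum_smul_eq (hq j)).symm

theorem exists_decompositionValues_le [Fintype S] {Q : Set E} {p : E} {h : S → E → 𝕜}
    {g : E → 𝕜} (hg : ∀ j y, g y ≤ h j y) :
    ∀ t ∈ facetDecompositionValues Q p h, ∃ s ∈ decompositionValues Q p g, s ≤ t := by
  rintro t ⟨W, q, hW, hW1, hqQ, hqp, rfl⟩
  let e := (Fintype.equivFin S).symm
  refine ⟨∑ i, W (e i) * g (q (e i)),
    ⟨_, fun i => W (e i), fun i => q (e i), fun i => hW _, ?_, fun i => hqQ _, ?_, rfl⟩, ?_⟩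
  · rwa [e.sum_comp W]
  · rwa [e.sum_comp fun j => W j • q j]
  · rw [e.sum_comp fun j => W j * g (q j)]
    exact sum_le_sum fun j _ => mul_le_mul_of_nonneg_left (hg j (q j)) (hW j)

end

theorem min_of_facet_objective_eq_general
    (d : ℕ) (Q : Set (Fin d → ℝ)) (hQne : Q.Nonempty) (hQ : Convex ℝ Q)
    (S : Type*) [Fintype S] [Nonempty S]
    (h : S → (Fin d → ℝ) → ℝ) (α : S → ℝ) (v : S → (Fin d → ℝ))
    (haff : ∀ j x, h j x = α j + ∑ i, v j i * x i)
    (p : Fin d → ℝ) :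
    sInf {t : ℝ | ∃ (m : ℕ) (w : Fin m → ℝ) (x : Fin m → (Fin d → ℝ)),
        (∀ i, 0 ≤ w i) ∧ (∑ i, w i = 1) ∧ (∀ i, x i ∈ Q) ∧ (∑ i, w i • x i = p) ∧
        t = ∑ i, w i * (Finset.univ.inf' Finset.univ_nonempty (fun j : S => h j (x i)))}
      = sInf {t : ℝ | ∃ (W : S → ℝ) (q : S → (Fin d → ℝ)),
        (∀ j, 0 ≤ W j) ∧ (∑ j, W j = 1) ∧ (∀ j, q j ∈ Q) ∧ (∑ j, W j • q j = p) ∧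
        t = ∑ j, W j * h j (q j)} := by
  obtain ⟨f, rfl⟩ : ∃ f : S → (Fin d → ℝ) →ᵃ[ℝ] ℝ, h = fun j => ⇑(f j) :=
    ⟨fun j => AffineMap.const ℝ _ (α j) + (dotProductBilin ℝ ℝ (v j)).toAffineMap,
      funext₂ fun j x => by simp [haff, dotProduct]⟩
  exact csInf_eq_csInf_of_forall_exists_le
    (fun t ht => ⟨t, decompositionValues_inf'_subset_facetDecompositionValues hQ hQne f p ht,
      le_rfl⟩)
    (exists_decompositionValues_le (g := fun y => univ.inf' univ_nonempty fun j => f j y)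
      fun j y => inf'_le _ (mem_univ j))

theorem min_of_facet_objective_eq
    (d : ℕ) (Q : Set (Fin d → ℝ)) (hQne : Q.Nonempty) (hQ : Convex ℝ Q)
    (hQb : Bornology.IsBounded Q)
    (S : Type*) [Fintype S] [Nonempty S]
    (h : S → (Fin d → ℝ) → ℝ) (α : S → ℝ) (v : S → (Fin d → ℝ))
    (haff : ∀ j x, h j x = α j + ∑ i, v j i * x i)
    (p : Fin d → ℝ) (hp : p ∈ Q) :
    sInf {t : ℝ | ∃ (m : ℕ) (w : Fin m → ℝ) (x : Fin m → (Fin d → ℝ)),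
        (∀ i, 0 ≤ w i) ∧ (∑ i, w i = 1) ∧ (∀ i, x i ∈ Q) ∧ (∑ i, w i • x i = p) ∧
        t = ∑ i, w i * (Finset.univ.inf' Finset.univ_nonempty (fun j : S => h j (x i)))}
      = sInf {t : ℝ | ∃ (W : S → ℝ) (q : S → (Fin d → ℝ)),
        (∀ j, 0 ≤ W j) ∧ (∑ j, W j = 1) ∧ (∀ j, q j ∈ Q) ∧ (∑ j, W j • q j = p) ∧
        t = ∑ j, W j * h j (q j)} :=
  min_of_facet_objective_eq_general d Q hQne hQ S h α v haff p
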